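/- Let k ≥ 2 be an even integer and let D be a k-quasi-transitive digraph. If v is a (k+2)-king of D and u is a vertex with d(v,u) = k+2, then u is a 3-king of D. Moreover, for every vertex w with d(u,w) = 3 one has d(v,w) = k+2, and w is also a 3-king of D. -/

import Mathlib

variable {V : Type*}

/-- A directed path of length `n` from `u` to `v` in the digraph with arc relation `A`:
a sequence of `n + 1` pairwise distinct vertices, consecutive ones joined by arcs. -/
def HasPathN (A : V → V → Prop) (u v : V) (n : ℕ) : Prop :=
  ∃ f : Fin (n + 1) → V, Function.Injective f ∧ f 0 = u ∧ f (Fin.last n) = v ∧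
    ∀ i : Fin n, A (f i.castSucc) (f i.succ)

/-- The distance from `u` to `v`: the length of a shortest directed path from `u` to `v`,
`⊤` if there is no such path. -/
noncomputable def ddist (A : V → V → Prop) (u v : V) : ℕ∞ :=
  sInf {n : ℕ∞ | ∃ m : ℕ, n = (m : ℕ∞) ∧ HasPathN A u v m}

/-- `D` is `k`-quasi-transitive if for every directed path `(v_0, …, v_k)` of length `k`,
either `(v_0, v_k)` or `(v_k, v_0)` is an arc. -/
def KQuasiTrans (A : V → V → Prop) (k : ℕ) : Prop :=
  ∀ u v : V, HasPathN A u v k → A u v ∨ A v u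

/-- A vertex `v` is an `r`-king if every vertex is within distance `r` from `v`. -/
def IsRKing (A : V → V → Prop) (r : ℕ) (v : V) : Prop :=
  ∀ u : V, ddist A v u ≤ (r : ℕ∞)

/-- `u` reaches `v` by a directed path. -/
def Reaches (A : V → V → Prop) (u v : V) : Prop :=
  ∃ n : ℕ, HasPathN A u v n

/-- A strong component: the set of all vertices mutually reachable with some vertex. -/
def IsStrongComponent (A : V → V → Prop) (S : Set V) : Prop :=
  ∃ v : V, S = {u | Reaches A u v ∧ Reaches A v u}

/-- An initial strong component: a strong component receiving no arcs from outside. -/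
def IsInitialStrongComponent (A : V → V → Prop) (S : Set V) : Prop :=
  IsStrongComponent A S ∧ ∀ u v : V, u ∉ S → v ∈ S → ¬ A u v

/-- The out-degree of `v` in `D`. -/
noncomputable def outDeg (A : V → V → Prop) (v : V) : ℕ :=
  {u : V | A v u}.ncard

/-- The out-degree of `v` in the subdigraph of `D` induced by `C`. -/
noncomputable def outDegIn (A : V → V → Prop) (C : Set V) (v : V) : ℕ :=
  {u ∈ C | A v u}.ncard

/-- The maximum out-degree of the subdigraph induced by `C`. -/
noncomputable def maxOutDegIn (A : V → V → Prop) (C : Set V) : ℕ :=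
  sSup (outDegIn A C '' C)

/-!
Let `v = X 0, X 1, …, X (k + 2) = u` be a shortest path. Quasi-transitivity applied to
`X 0, …, X k` gives the back arc `X k → X 0`, since `X 0 → X k` would shortcut the path.
The key observation is that a path of length `k` from `u` to a vertex `z` with `d(v, z) ≤ k`
forces `u → z`: the alternative `z → u` would give `d(v, u) ≤ k + 1`. Such paths are assembled
from `u`, segments of shortest paths from `v` and the back arc; their vertices are distinct
because their distances from `v` are. Descending along `X` in steps of two from `X (k - 1)` and
from `X k` (this is where the parity of `k` enters), `u` dominates `X 0, …, X k`, and then the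
first `k + 1` vertices of every shortest path from `v`. Hence
`d(u, w) ≤ 1 + max(0, d(v, w) - k) ≤ 3`, with equality only if `d(v, w) = k + 2`; the argument
then applies to `w` in place of `u`.
-/

open Set

/-- Walks are indexed by `ℕ`; only `f 0, …, f n` matter. -/
def IsWalk (A : V → V → Prop) (f : ℕ → V) (n : ℕ) : Prop :=
  ∀ i < n, A (f i) (f (i + 1))

def IsGeodesic (A : V → V → Prop) (X : ℕ → V) (m : ℕ) : Prop :=
  IsWalk A X m ∧ ∀ t ≤ m, ddist A (X 0) (X t) = t

section Walks

variable {A : V → V → Prop}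

theorem IsWalk.mono {f : ℕ → V} {n m : ℕ} (hf : IsWalk A f n) (hmn : m ≤ n) :
    IsWalk A f m :=
  fun i hi => hf i (by omega)

theorem IsWalk.drop {f : ℕ → V} {n : ℕ} (hf : IsWalk A f n) (a : ℕ) :
    IsWalk A (fun t => f (a + t)) (n - a) :=
  fun i hi => hf (a + i) (by omega)

theorem hasPathN_iff {a b : V} {n : ℕ} :
    HasPathN A a b n ↔
      ∃ f : ℕ → V, f 0 = a ∧ f n = b ∧ IsWalk A f n ∧ InjOn f (Iic n) := by
  constructor
  · rintro ⟨f, hinj, h0, hn, harc⟩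
    refine ⟨fun t => f ⟨min t n, by omega⟩, by simpa using h0, by simpa [Fin.last] using hn,
      fun i hi => ?_, fun i hi j hj hij => ?_⟩
    · convert harc ⟨i, hi⟩ using 2 <;> ext <;> simp <;> omega
    · have := Fin.val_eq_of_eq (hinj hij)
      simp only [mem_Iic] at hi hj this
      omega
  · rintro ⟨f, h0, hn, hf, hinj⟩
    refine ⟨fun i => f i, fun i j hij => Fin.ext ?_, h0, hn, fun i => hf i i.isLt⟩
    exact hinj (by simpa using i.is_le) (by simpa using j.is_le) hij

theorem ddist_le_of_hasPathN {a b : V} {n : ℕ} (h : HasPathN A a b n) : ddist A a b ≤ n :=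
  sInf_le ⟨n, rfl, h⟩

theorem hasPathN_of_ddist_eq {a b : V} {n : ℕ} (h : ddist A a b = n) : HasPathN A a b n := by
  have hne : {d : ℕ∞ | ∃ m : ℕ, d = m ∧ HasPathN A a b m}.Nonempty := by
    rw [nonempty_iff_ne_empty]
    intro hempty
    simp [ddist, hempty] at h
  obtain ⟨m, hm, hp⟩ := csInf_mem hne
  rwa [← Nat.cast_inj.mp (hm.symm.trans h)]

theorem ddist_self (a : V) : ddist A a a = 0 :=
  nonpos_iff_eq_zero.mp <| ddist_le_of_hasPathN <| hasPathN_iff.2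
    ⟨fun _ => a, rfl, rfl, fun _ hi => absurd hi (Nat.not_lt_zero _),
      fun _ _ _ _ _ => by simp_all⟩

/- Either `c` already lies on a shortest path from `a` to `b`, or appending it to that path
gives a path. -/
theorem ddist_le_add_one_of_adj (a : V) {b c : V} (hbc : A b c) :
    ddist A a c ≤ ddist A a b + 1 := by
  rcases eq_top_or_lt_top (ddist A a b) with htop | hlt
  · simp [htop]
  obtain ⟨m, hm⟩ := ENat.ne_top_iff_exists.mp hlt.ne
  obtain ⟨f, rfl, rfl, hf, hinj⟩ := hasPathN_iff.mp (hasPathN_of_ddist_eq hm.symm)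
  rw [← hm]
  by_cases hc : c ∈ f '' Iic m
  · obtain ⟨j, hj, rfl⟩ := hc
    have hp : HasPathN A (f 0) (f j) j :=
      hasPathN_iff.2 ⟨f, rfl, rfl, hf.mono hj, hinj.mono (Iic_subset_Iic.2 hj)⟩
    calc ddist A (f 0) (f j) ≤ j := ddist_le_of_hasPathN hp
      _ ≤ m + 1 := by norm_cast; simp only [mem_Iic] at hj; omega
  · let g : ℕ → V := fun t => if t ≤ m then f t else c
    have hg : IsWalk A g (m + 1) := by
      intro i hi
      by_cases him : i + 1 ≤ m
      · simpa [g, him, show i ≤ m by omega] using hf i him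
      · obtain rfl : i = m := by omega
        simpa [g] using hbc
    have hginj : InjOn g (Iic (m + 1)) := by
      intro i hi j hj hij
      simp only [mem_Iic] at hi hj
      by_cases him : i ≤ m <;> by_cases hjm : j ≤ m <;>
        simp only [g, him, hjm, if_true, if_false] at hij
      · exact hinj him hjm hij
      · exact absurd ⟨i, him, hij⟩ hc
      · exact absurd ⟨j, hjm, hij.symm⟩ hc
      · omega
    have hp : HasPathN A (f 0) c (m + 1) :=
      hasPathN_iff.2 ⟨g, by simp [g], by simp [g], hg, hginj⟩
    exact_mod_cast ddist_le_of_hasPathN hp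

theorem ddist_le_one_of_adj {a b : V} (hab : A a b) : ddist A a b ≤ 1 := by
  simpa [ddist_self] using ddist_le_add_one_of_adj a hab

theorem ddist_le_add_of_isWalk (a : V) {f : ℕ → V} {n : ℕ} (hf : IsWalk A f n) :
    ddist A a (f n) ≤ ddist A a (f 0) + n := by
  induction n with
  | zero => simp
  | succ n ih =>
    calc ddist A a (f (n + 1)) ≤ ddist A a (f n) + 1 :=
          ddist_le_add_one_of_adj a (hf n n.lt_succ_self)
      _ ≤ ddist A a (f 0) + n + 1 := by gcongr; exact ih (hf.mono n.le_succ)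
      _ = ddist A a (f 0) + (n + 1 : ℕ) := by push_cast; ring

theorem ddist_le_of_isWalk {f : ℕ → V} {n : ℕ} (hf : IsWalk A f n) :
    ddist A (f 0) (f n) ≤ n := by
  simpa [ddist_self] using ddist_le_add_of_isWalk (f 0) hf

theorem hasPathN_of_injOn_ddist (a : V) {f : ℕ → V} {n : ℕ} (hf : IsWalk A f n)
    (hinj : InjOn (fun t => ddist A a (f t)) (Iic n)) : HasPathN A (f 0) (f n) n :=
  hasPathN_iff.2 ⟨f, rfl, rfl, hf, InjOn.of_comp (g := ddist A a) hinj⟩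

end Walks

section Geodesics

variable {A : V → V → Prop}

theorem exists_isGeodesic {a b : V} {m : ℕ} (h : ddist A a b = m) :
    ∃ X, IsGeodesic A X m ∧ X 0 = a ∧ X m = b := by
  obtain ⟨X, rfl, rfl, hX, -⟩ := hasPathN_iff.mp (hasPathN_of_ddist_eq h)
  refine ⟨X, ⟨hX, fun t ht => ?_⟩, rfl, rfl⟩
  have hle : ddist A (X 0) (X t) ≤ t := ddist_le_of_isWalk (hX.mono ht)
  obtain ⟨d, hd, hdt⟩ := ENat.le_natCast_iff.mp hle
  have hsuffix := ddist_le_add_of_isWalk (X 0) (hX.drop t)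
  simp only [Nat.add_sub_cancel' ht, h, add_zero, hd] at hsuffix ⊢
  norm_cast at hsuffix ⊢
  omega

theorem IsGeodesic.injOn_ddist {X : ℕ → V} {m : ℕ} (hX : IsGeodesic A X m) :
    InjOn (fun t => ddist A (X 0) (X t)) (Iic m) := fun i hi j hj hij => by
  simpa [hX.2 i hi, hX.2 j hj] using hij

theorem IsGeodesic.hasPathN {X : ℕ → V} {m a b : ℕ} (hX : IsGeodesic A X m) (hab : a ≤ b)
    (hbm : b ≤ m) : HasPathN A (X a) (X b) (b - a) := by
  have hp := hasPathN_of_injOn_ddist (X 0) ((hX.1.drop a).mono (show b - a ≤ m - a by omega))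
    (fun i hi j hj hij => by
      simp only [mem_Iic] at hi hj
      have := hX.injOn_ddist (show a + i ∈ Iic m by simp; omega)
        (show a + j ∈ Iic m by simp; omega) hij
      omega)
  simpa [Nat.add_sub_cancel' hab] using hp

end Geodesics

theorem KQuasiTrans.adj_of_adj_of_isWalk {A : V → V → Prop} {k : ℕ}
    (hqt : KQuasiTrans A (k + 1)) (a : V) {u : V} {g : ℕ → V} (hu : A u (g 0))
    (hg : IsWalk A g k) (hinj : InjOn (fun t => ddist A a (g t)) (Iic k))
    (hlt : ∀ t ≤ k, ddist A a (g t) + 1 < ddist A a u) : A u (g k) := by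
  let f : ℕ → V := fun | 0 => u | t + 1 => g t
  have hf : IsWalk A f (k + 1) := fun
    | 0, _ => hu
    | i + 1, hi => hg i (by omega)
  have hfinj : InjOn (fun t => ddist A a (f t)) (Iic (k + 1)) := by
    have hne : ∀ t ≤ k, ddist A a (g t) ≠ ddist A a u := fun t ht =>
      (lt_of_le_of_lt le_self_add (hlt t ht)).ne
    rintro (_ | i) hi (_ | j) hj hij
    · rfl
    · exact absurd hij.symm (hne j (by simp at hj; omega))
    · exact absurd hij (hne i (by simp at hi; omega))
    · simp only [mem_Iic] at hi hj
      simpa using hinj (show i ∈ Iic k by simp; omega) (show j ∈ Iic k by simp; omega) hij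
  refine (hqt u (g k) (hasPathN_of_injOn_ddist a hf hfinj)).resolve_right fun hback => ?_
  exact (hlt k le_rfl).not_ge (ddist_le_add_one_of_adj a hback)

section FarVertex

variable {A : V → V → Prop} {k : ℕ} {X : ℕ → V}

theorem adj_geodesic_back (hqt : KQuasiTrans A k) (hk : 2 ≤ k) (hX : IsGeodesic A X (k + 2)) :
    A (X k) (X 0) := by
  refine (hqt _ _ (by simpa using hX.hasPathN (Nat.zero_le k) (by omega))).resolve_left
    fun hfwd => ?_
  have h := ddist_le_one_of_adj hfwd
  rw [hX.2 k (by omega)] at h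
  norm_cast at h
  omega

theorem adj_far_two (hqt : KQuasiTrans A k) (hk : 2 ≤ k) (hX : IsGeodesic A X (k + 2)) :
    A (X (k + 2)) (X 2) := by
  refine (hqt _ _ (by simpa using hX.hasPathN (show 2 ≤ k + 2 by omega) le_rfl)).resolve_left
    fun hback => ?_
  have h := ddist_le_add_one_of_adj (X 0) hback
  rw [hX.2 _ le_rfl, hX.2 2 (by omega)] at h
  norm_cast at h
  omega

/- The path of length `k` is `X (k + 2), Y b, …, Y e`. -/
theorem adj_far_geodesic_of_adj {Y : ℕ → V} {m b e : ℕ} (hqt : KQuasiTrans A k)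
    (hX : IsGeodesic A X (k + 2)) (hY : IsGeodesic A Y m) (hY0 : Y 0 = X 0)
    (hbe : b ≤ e) (hem : e ≤ m) (hek : e ≤ k) (hlen : e - b + 1 = k)
    (h : A (X (k + 2)) (Y b)) : A (X (k + 2)) (Y e) := by
  rw [← hlen] at hqt
  have hlabel : ∀ t ≤ e - b, ddist A (X 0) (Y (b + t)) = (b + t : ℕ) := fun t ht => by
    rw [← hY0]
    exact hY.2 _ (by omega)
  have := hqt.adj_of_adj_of_isWalk (X 0) (g := fun t => Y (b + t)) h
    ((hY.1.drop b).mono (by omega))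
    (fun i hi j hj hij => by
      simp only [mem_Iic] at hi hj
      simpa [hlabel i hi, hlabel j hj] using hij)
    (fun t ht => by
      rw [hlabel t ht, hX.2 _ le_rfl]
      norm_cast
      omega)
  simpa [Nat.add_sub_cancel' hbe] using this

/- The path of length `k` is `X (k + 2), X (i + 2), …, X k, Y 0, …, Y i`, through the back arc
`X k → X 0 = Y 0`. -/
theorem adj_far_geodesic_of_adj_add_two {Y : ℕ → V} {m i : ℕ} (hqt : KQuasiTrans A k)
    (hk : 2 ≤ k) (hX : IsGeodesic A X (k + 2)) (hY : IsGeodesic A Y m) (hY0 : Y 0 = X 0)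
    (hik : i + 2 ≤ k) (him : i ≤ m) (h : A (X (k + 2)) (X (i + 2))) :
    A (X (k + 2)) (Y i) := by
  have hqt' : KQuasiTrans A (k - 1 + 1) := by rwa [Nat.sub_add_cancel (by omega : 1 ≤ k)]
  let g : ℕ → V := fun t => if t ≤ k - i - 2 then X (i + 2 + t) else Y (t - (k - i - 1))
  have hlabel : ∀ t ≤ k - 1, ddist A (X 0) (g t) =
      ((if t ≤ k - i - 2 then i + 2 + t else t - (k - i - 1) : ℕ) : ℕ∞) := fun t ht => by
    by_cases hti : t ≤ k - i - 2
    · simp only [g, hti, if_true]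
      exact hX.2 _ (by omega)
    · simp only [g, hti, if_false]
      rw [← hY0]
      exact hY.2 _ (by omega)
  have hg : IsWalk A g (k - 1) := by
    intro t ht
    by_cases hti : t + 1 ≤ k - i - 2
    · simpa [g, hti, show t ≤ k - i - 2 by omega, Nat.add_assoc] using
        hX.1 (i + 2 + t) (by omega)
    by_cases hlast : t = k - i - 2
    · simp only [g, hlast, le_refl, if_true, show ¬ k - i - 2 + 1 ≤ k - i - 2 by omega,
        if_false, show k - i - 2 + 1 - (k - i - 1) = 0 by omega,
        show i + 2 + (k - i - 2) = k by omega, hY0]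
      exact adj_geodesic_back hqt hk hX
    · simpa [g, hti, show ¬ t ≤ k - i - 2 by omega,
        show t + 1 - (k - i - 1) = t - (k - i - 1) + 1 by omega] using
        hY.1 (t - (k - i - 1)) (by omega)
  have := hqt'.adj_of_adj_of_isWalk (X 0) (g := g) (by simpa [g] using h) hg
    (fun a ha b hb hab => by
      simp only [mem_Iic] at ha hb
      dsimp only at hab
      rw [hlabel a ha, hlabel b hb, Nat.cast_inj] at hab
      split_ifs at hab <;> omega)
    (fun t ht => by
      rw [hlabel t ht, hX.2 _ le_rfl]
      norm_cast
      split_ifs <;> omega)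
  simpa [g, show ¬ k - 1 ≤ k - i - 2 by omega, show k - 1 - (k - i - 1) = i by omega] using this

theorem adj_far_of_le (hqt : KQuasiTrans A k) (hk : 2 ≤ k) (hke : Even k)
    (hX : IsGeodesic A X (k + 2)) {i : ℕ} (hi : i ≤ k) : A (X (k + 2)) (X i) := by
  have hdescend : ∀ j t, j + 2 * t ≤ k →
      A (X (k + 2)) (X (j + 2 * t)) → A (X (k + 2)) (X j) := by
    intro j t
    induction t with
    | zero => simp
    | succ t ih =>
      intro ht h
      exact ih (by omega)
        (adj_far_geodesic_of_adj_add_two hqt hk hX hX rfl (by omega) (by omega) h)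
  have h0 : A (X (k + 2)) (X 0) :=
    adj_far_geodesic_of_adj_add_two hqt hk hX hX rfl hk (Nat.zero_le _) (adj_far_two hqt hk hX)
  have hpred : A (X (k + 2)) (X (k - 1)) :=
    adj_far_geodesic_of_adj hqt hX hX rfl (Nat.zero_le _) (by omega) (by omega) (by omega) h0
  obtain ⟨c, rfl⟩ := hke
  have h1 : A (X (c + c + 2)) (X 1) :=
    hdescend 1 (c - 1) (by omega) ((show c + c - 1 = 1 + 2 * (c - 1) by omega) ▸ hpred)
  have htop : A (X (c + c + 2)) (X (c + c)) :=
    adj_far_geodesic_of_adj hqt hX hX rfl (by omega) (by omega) le_rfl (by omega) h1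
  obtain ⟨j, rfl | rfl⟩ := Nat.even_or_odd' i
  · exact hdescend (2 * j) (c - j) (by omega)
      ((show c + c = 2 * j + 2 * (c - j) by omega) ▸ htop)
  · exact hdescend (2 * j + 1) (c - j - 1) (by omega)
      ((show c + c - 1 = 2 * j + 1 + 2 * (c - j - 1) by omega) ▸ hpred)

theorem adj_far_geodesic (hqt : KQuasiTrans A k) (hk : 2 ≤ k) (hke : Even k)
    (hX : IsGeodesic A X (k + 2)) {Y : ℕ → V} {m i : ℕ} (hY : IsGeodesic A Y m)
    (hY0 : Y 0 = X 0) (hik : i ≤ k) (him : i ≤ m) : A (X (k + 2)) (Y i) := by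
  have hlow : ∀ j ≤ k - 1, j ≤ m → A (X (k + 2)) (Y j) := by
    intro j hj hjm
    by_cases hj2 : j + 2 ≤ k
    · exact adj_far_geodesic_of_adj_add_two hqt hk hX hY hY0 hj2 hjm
        (adj_far_of_le hqt hk hke hX hj2)
    · obtain rfl : j = k - 1 := by omega
      exact adj_far_geodesic_of_adj hqt hX hY hY0 (Nat.zero_le _) hjm (by omega) (by omega)
        (hY0 ▸ adj_far_of_le hqt hk hke hX (Nat.zero_le k))
  rcases Nat.lt_or_ge i k with hi | hi
  · exact hlow i (by omega) him
  · obtain rfl : i = k := by omega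
    exact adj_far_geodesic_of_adj hqt hX hY hY0 (by omega) him le_rfl (by omega)
      (hlow 1 (by omega) (by omega))

theorem ddist_far_geodesic_le (hqt : KQuasiTrans A k) (hk : 2 ≤ k) (hke : Even k)
    (hX : IsGeodesic A X (k + 2)) {Y : ℕ → V} {m : ℕ} (hY : IsGeodesic A Y m)
    (hY0 : Y 0 = X 0) : ddist A (X (k + 2)) (Y m) ≤ (m - k : ℕ) + 1 := by
  rcases le_total m k with hmk | hkm
  · simpa [Nat.sub_eq_zero_of_le hmk] using
      ddist_le_one_of_adj (adj_far_geodesic hqt hk hke hX hY hY0 hmk le_rfl)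
  have hk1 := ddist_le_one_of_adj (adj_far_geodesic hqt hk hke hX hY hY0 le_rfl hkm)
  have hsuffix := ddist_le_add_of_isWalk (X (k + 2)) (hY.1.drop k)
  simp only [Nat.add_sub_cancel' hkm, add_zero] at hsuffix
  calc ddist A (X (k + 2)) (Y m) ≤ ddist A (X (k + 2)) (Y k) + (m - k : ℕ) := hsuffix
    _ ≤ 1 + (m - k : ℕ) := by gcongr
    _ = (m - k : ℕ) + 1 := add_comm _ _

end FarVertex

section Kings

variable {A : V → V → Prop} {k : ℕ}

theorem ddist_le_of_ddist_eq_add_two (hqt : KQuasiTrans A k) (hk : 2 ≤ k) (hke : Even k)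
    {v u w : V} {m : ℕ} (hu : ddist A v u = k + 2) (hw : ddist A v w = m) :
    ddist A u w ≤ (m - k : ℕ) + 1 := by
  obtain ⟨X, hX, hX0, rfl⟩ := exists_isGeodesic (m := k + 2) (by exact_mod_cast hu)
  obtain ⟨Y, hY, hY0, rfl⟩ := exists_isGeodesic hw
  exact ddist_far_geodesic_le hqt hk hke hX hY (hY0.trans hX0.symm)

theorem isRKing_three_of_ddist_eq_add_two (hqt : KQuasiTrans A k) (hk : 2 ≤ k) (hke : Even k)
    {v u : V} (hv : IsRKing A (k + 2) v) (hu : ddist A v u = k + 2) : IsRKing A 3 u :=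
  fun w => by
    obtain ⟨m, hw, hm⟩ := ENat.le_natCast_iff.mp (hv w)
    exact (ddist_le_of_ddist_eq_add_two hqt hk hke hu hw).trans (by norm_cast; omega)

end Kings

theorem kqt_even_far_vertex_three_king_general
    (A : V → V → Prop)
    (k : ℕ) (hk : 2 ≤ k) (hke : Even k) (hqt : KQuasiTrans A k)
    (v u : V) (hv : IsRKing A (k + 2) v) (hd : ddist A v u = ((k : ℕ∞) + 2)) :
    IsRKing A 3 u ∧
      ∀ w : V, ddist A u w = (3 : ℕ∞) →
        ddist A v w = ((k : ℕ∞) + 2) ∧ IsRKing A 3 w := by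
  refine ⟨isRKing_three_of_ddist_eq_add_two hqt hk hke hv hd, fun w hw => ?_⟩
  obtain ⟨m, hvw, hm⟩ := ENat.le_natCast_iff.mp (hv w)
  have h3 := ddist_le_of_ddist_eq_add_two hqt hk hke hd hvw
  rw [hw] at h3
  have hfar : ddist A v w = k + 2 := by
    rw [hvw]
    norm_cast at h3 ⊢
    omega
  exact ⟨hfar, isRKing_three_of_ddist_eq_add_two hqt hk hke hv hfar⟩

/-- even `k ≥ 2`; if `v` is a `(k+2)`-king and `d(v,u) = k+2`, then `u` is a
`3`-king; moreover every `w` with `d(u,w) = 3` satisfies `d(v,w) = k+2` and is a `3`-king. -/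
theorem kqt_even_far_vertex_three_king
    [Fintype V] (A : V → V → Prop) (hloop : ∀ v : V, ¬ A v v)
    (k : ℕ) (hk : 2 ≤ k) (hke : Even k) (hqt : KQuasiTrans A k)
    (v u : V) (hv : IsRKing A (k + 2) v) (hd : ddist A v u = ((k : ℕ∞) + 2)) :
    IsRKing A 3 u ∧
      ∀ w : V, ddist A u w = (3 : ℕ∞) →
        ddist A v w = ((k : ℕ∞) + 2) ∧ IsRKing A 3 w :=
  kqt_even_far_vertex_three_king_general A k hk hke hqt v u hv hd
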